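/- Let h : ℝ → ℝ be continuous with support in [0,1], and define h̃(s) = ∫_s^1 h(t) dt for s ∈ [0,1]. If 0 ≤ h̃ ≤ 1_{[t₁,t₂]} pointwise for some 0 ≤ t₁ < t₂ ≤ 1, then for any γ > δ > 0 and n ≥ 1: n³ ∫₀¹ e^{-nδ s} ∫_s¹ e^{-nγ(u-s)} h̃(u) ∫_s^u h̃(v) dv du ds ≤ (n/(γ-δ)²) · e^{-nδ t₁} · (t₂ - t₁). -/

import Mathlib

/-!
From `0 ≤ h̃ ≤ 1_{[t₁,t₂]}` the inner integral `∫_s^u h̃` is at most `u - s`, and the integrand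
vanishes unless `u ∈ [t₁, t₂]`; there `e^{-nδs} e^{-nγ(u-s)} ≤ e^{-nδt₁} e^{-a(u-s)}` with
`a = n(γ - δ)`. Hence the triple integral is at most `e^{-nδt₁} ∫_s ∫_{u ∈ [t₁,t₂]} k(u - s)`,
where `k(x) = x e^{-ax}` for `x > 0`. After exchanging the order of integration, each slice in `u`
contributes at most `∫ k = Γ(2)/a² = 1/a²`, so the whole is at most
`n³ e^{-nδt₁} (t₂ - t₁) / a² = n e^{-nδt₁} (t₂ - t₁) / (γ - δ)²`.
-/

open MeasureTheory Real Set

noncomputable def expKernel (a : ℝ) : ℝ → ℝ :=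
  (Ioi 0).indicator fun x => x * exp (-(a * x))

namespace expKernel

variable {a : ℝ}

lemma nonneg (a x : ℝ) : 0 ≤ expKernel a x :=
  indicator_nonneg (fun _ hx => mul_nonneg (le_of_lt hx) (exp_nonneg _)) x

lemma apply_of_pos {x : ℝ} (hx : 0 < x) : expKernel a x = x * exp (-(a * x)) :=
  indicator_of_mem hx _

lemma le_inv (ha : 0 < a) (x : ℝ) : expKernel a x ≤ a⁻¹ := by
  by_cases hx : 0 < x
  · rw [apply_of_pos hx, exp_neg, ← div_eq_mul_inv, div_le_iff₀ (exp_pos _),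
      le_inv_mul_iff₀ ha]
    linarith [add_one_le_exp (a * x)]
  · rw [expKernel, indicator_of_notMem (show x ∉ Ioi 0 from hx)]
    exact (inv_pos.2 ha).le

lemma measurable (a : ℝ) : Measurable (expKernel a) :=
  Measurable.indicator (by fun_prop) measurableSet_Ioi

lemma integral_eq (ha : 0 < a) : ∫ x, expKernel a x = (a ^ 2)⁻¹ := by
  have h := integral_rpow_mul_exp_neg_mul_Ioi two_pos ha
  norm_num [Gamma_two] at h
  rw [expKernel, integral_indicator measurableSet_Ioi, h]

-- A non-integrable function has Bochner integral `0`.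
lemma integrable (ha : 0 < a) : Integrable (expKernel a) :=
  Integrable.of_integral_ne_zero (by rw [integral_eq ha]; positivity)

lemma setIntegral_sub_le (ha : 0 < a) (A : Set ℝ) (u : ℝ) :
    ∫ s in A, expKernel a (u - s) ≤ (a ^ 2)⁻¹ := by
  calc ∫ s in A, expKernel a (u - s) ≤ ∫ s, expKernel a (u - s) :=
        setIntegral_le_integral ((integrable ha).comp_sub_left u)
          (ae_of_all _ fun s => nonneg a (u - s))
    _ = (a ^ 2)⁻¹ := by rw [integral_sub_left_eq_self (expKernel a), integral_eq ha]

lemma integrable_sub_prod (ha : 0 < a) {A B : Set ℝ} (hA : volume A ≠ ⊤) (hB : volume B ≠ ⊤) :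
    Integrable (Function.uncurry fun s u => expKernel a (u - s))
      ((volume.restrict A).prod (volume.restrict B)) := by
  have := isFiniteMeasure_restrict.2 hA
  have := isFiniteMeasure_restrict.2 hB
  exact Integrable.of_bound ((measurable a).comp (by fun_prop)).aestronglyMeasurable a⁻¹
    (ae_of_all _ fun _ => (norm_of_nonneg (nonneg a _)).trans_le (le_inv ha _))

lemma setIntegral_setIntegral_sub_le (ha : 0 < a) {A B : Set ℝ} (hA : volume A ≠ ⊤)
    (hB : volume B ≠ ⊤) :
    ∫ s in A, ∫ u in B, expKernel a (u - s) ≤ (a ^ 2)⁻¹ * volume.real B := by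
  have := isFiniteMeasure_restrict.2 hB
  rw [integral_integral_swap (integrable_sub_prod ha hA hB)]
  calc ∫ u in B, ∫ s in A, expKernel a (u - s) ≤ ∫ _ in B, (a ^ 2)⁻¹ :=
        integral_mono_of_nonneg (ae_of_all _ fun u => integral_nonneg fun s => nonneg a _)
          (integrable_const _) (ae_of_all _ fun u => setIntegral_sub_le ha A u)
    _ = (a ^ 2)⁻¹ * volume.real B := by rw [setIntegral_const, smul_eq_mul, mul_comm]

end expKernel

section WeightedTripleIntegral

variable {f : ℝ → ℝ} {t₁ t₂ N γ δ : ℝ}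

lemma setIntegral_Ioc_le_sub_of_le_one (hf₀ : ∀ x, 0 ≤ f x) (hf₁ : ∀ x, f x ≤ 1) {s u : ℝ}
    (hsu : s ≤ u) : ∫ v in Ioc s u, f v ≤ u - s := by
  have h := norm_setIntegral_le_of_norm_le_const (μ := volume)
    (measure_Ioc_lt_top (a := s) (b := u)) fun v _ => (norm_of_nonneg (hf₀ v)).trans_le (hf₁ v)
  rw [Real.volume_real_Ioc_of_le hsu, one_mul] at h
  exact (le_abs_self _).trans h

lemma exp_mul_exp_le_of_le (hNδ : 0 ≤ N * δ) {s u : ℝ} (hu : t₁ ≤ u) :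
    exp (-N * δ * s) * exp (-N * γ * (u - s)) ≤
      exp (-N * δ * t₁) * exp (-(N * (γ - δ) * (u - s))) := by
  rw [← exp_add, ← exp_add, exp_le_exp]
  nlinarith [mul_nonneg hNδ (sub_nonneg.2 hu)]

lemma integrand_nonneg (hf₀ : ∀ x, 0 ≤ f x) (s u : ℝ) :
    0 ≤ exp (-N * γ * (u - s)) * f u * ∫ v in Ioc s u, f v :=
  mul_nonneg (mul_nonneg (exp_nonneg _) (hf₀ u)) (integral_nonneg fun v => hf₀ v)

variable (hf : ∀ x, f x ≤ (Icc t₁ t₂).indicator (fun _ => 1) x)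
include hf

lemma le_one_of_le_indicator (x : ℝ) : f x ≤ 1 :=
  (hf x).trans (indicator_le_self' (fun _ _ => zero_le_one) x)

variable (hf₀ : ∀ x, 0 ≤ f x)
include hf₀

lemma integrand_le_indicator_expKernel (hNδ : 0 ≤ N * δ) {s u : ℝ} (hsu : s < u) :
    exp (-N * δ * s) * (exp (-N * γ * (u - s)) * f u * ∫ v in Ioc s u, f v) ≤
      (Icc t₁ t₂).indicator (fun u => exp (-N * δ * t₁) * expKernel (N * (γ - δ)) (u - s)) u := by
  by_cases hu : u ∈ Icc t₁ t₂
  · rw [indicator_of_mem hu, expKernel.apply_of_pos (sub_pos.2 hsu)]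
    have hfI : f u * ∫ v in Ioc s u, f v ≤ 1 * (u - s) :=
      mul_le_mul (le_one_of_le_indicator hf u)
        (setIntegral_Ioc_le_sub_of_le_one hf₀ (le_one_of_le_indicator hf) hsu.le)
        (integral_nonneg fun v => hf₀ v) zero_le_one
    calc exp (-N * δ * s) * (exp (-N * γ * (u - s)) * f u * ∫ v in Ioc s u, f v)
        = (exp (-N * δ * s) * exp (-N * γ * (u - s))) * (f u * ∫ v in Ioc s u, f v) := by ring
      _ ≤ (exp (-N * δ * t₁) * exp (-(N * (γ - δ) * (u - s)))) * (1 * (u - s)) :=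
          mul_le_mul (exp_mul_exp_le_of_le hNδ hu.1) hfI
            (mul_nonneg (hf₀ u) (integral_nonneg fun v => hf₀ v)) (by positivity)
      _ = exp (-N * δ * t₁) * ((u - s) * exp (-(N * (γ - δ) * (u - s)))) := by ring
  · have hfu : f u = 0 := le_antisymm (by simpa [indicator_of_notMem hu] using hf u) (hf₀ u)
    simp [hfu, indicator_of_notMem hu]

lemma integral_Ioc_le_expKernel (ha : 0 < N * (γ - δ)) (hNδ : 0 ≤ N * δ) (s b : ℝ) :
    exp (-N * δ * s) * ∫ u in Ioc s b, exp (-N * γ * (u - s)) * f u * ∫ v in Ioc s u, f v ≤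
      exp (-N * δ * t₁) * ∫ u in Icc t₁ t₂, expKernel (N * (γ - δ)) (u - s) := by
  have hint : Integrable ((Icc t₁ t₂).indicator
      fun u => exp (-N * δ * t₁) * expKernel (N * (γ - δ)) (u - s)) :=
    (((expKernel.integrable ha).comp_sub_right s).const_mul _).indicator measurableSet_Icc
  rw [← integral_const_mul]
  calc ∫ u in Ioc s b, exp (-N * δ * s) *
        (exp (-N * γ * (u - s)) * f u * ∫ v in Ioc s u, f v)
      ≤ ∫ u in Ioc s b, (Icc t₁ t₂).indicator
          (fun u => exp (-N * δ * t₁) * expKernel (N * (γ - δ)) (u - s)) u :=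
        integral_mono_of_nonneg
          (ae_of_all _ fun u => mul_nonneg (exp_nonneg _) (integrand_nonneg hf₀ s u))
          hint.integrableOn
          ((ae_restrict_iff' measurableSet_Ioc).2 (ae_of_all _ fun u hu =>
            integrand_le_indicator_expKernel hf hf₀ hNδ hu.1))
    _ ≤ ∫ u, (Icc t₁ t₂).indicator
          (fun u => exp (-N * δ * t₁) * expKernel (N * (γ - δ)) (u - s)) u :=
        setIntegral_le_integral hint (ae_of_all _ fun u =>
          indicator_nonneg (fun u _ => mul_nonneg (exp_nonneg _) (expKernel.nonneg _ _)) u)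
    _ = exp (-N * δ * t₁) * ∫ u in Icc t₁ t₂, expKernel (N * (γ - δ)) (u - s) := by
        rw [integral_indicator measurableSet_Icc, integral_const_mul]

lemma setIntegral_integral_Ioc_le_expKernel (ha : 0 < N * (γ - δ)) (hNδ : 0 ≤ N * δ)
    {A : Set ℝ} (hA : volume A ≠ ⊤) (b : ℝ) :
    ∫ s in A, exp (-N * δ * s) *
        ∫ u in Ioc s b, exp (-N * γ * (u - s)) * f u * ∫ v in Ioc s u, f v ≤
      exp (-N * δ * t₁) * ∫ s in A, ∫ u in Icc t₁ t₂, expKernel (N * (γ - δ)) (u - s) := by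
  rw [← integral_const_mul]
  refine integral_mono_of_nonneg (ae_of_all _ fun s => ?_)
    (((expKernel.integrable_sub_prod ha hA measure_Icc_lt_top.ne).integral_prod_left).const_mul _)
    (ae_of_all _ fun s => integral_Ioc_le_expKernel hf hf₀ ha hNδ s b)
  exact mul_nonneg (exp_nonneg _) (integral_nonneg fun u => integrand_nonneg hf₀ s u)

end WeightedTripleIntegral

theorem I3_tightness_estimate_general
    (ht : ℝ → ℝ)
    (t₁ t₂ : ℝ) (h12 : t₁ < t₂)
    (hbound : ∀ s, 0 ≤ ht s ∧ ht s ≤ Set.indicator (Set.Icc t₁ t₂) (fun _ => 1) s)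
    (γ δ : ℝ) (hδ : 0 < δ) (hγδ : δ < γ) (n : ℕ) (hn : 1 ≤ n) :
    (n : ℝ) ^ 3 *
        ∫ s in Set.Ioc (0:ℝ) 1, Real.exp (-(n : ℝ) * δ * s) *
          ∫ u in Set.Ioc s 1, Real.exp (-(n : ℝ) * γ * (u - s)) * ht u *
            ∫ v in Set.Ioc s u, ht v
      ≤ (n : ℝ) / (γ - δ) ^ 2 * Real.exp (-(n : ℝ) * δ * t₁) * (t₂ - t₁) := by
  have hn₀ : (0 : ℝ) < n := by exact_mod_cast hn
  have ha : 0 < (n : ℝ) * (γ - δ) := mul_pos hn₀ (sub_pos.2 hγδ)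
  calc (n : ℝ) ^ 3 * ∫ s in Ioc (0:ℝ) 1, exp (-(n : ℝ) * δ * s) *
          ∫ u in Ioc s 1, exp (-(n : ℝ) * γ * (u - s)) * ht u * ∫ v in Ioc s u, ht v
      ≤ (n : ℝ) ^ 3 * (exp (-(n : ℝ) * δ * t₁) *
          ∫ s in Ioc (0:ℝ) 1, ∫ u in Icc t₁ t₂, expKernel (n * (γ - δ)) (u - s)) := by
        gcongr
        exact setIntegral_integral_Ioc_le_expKernel (fun s => (hbound s).2) (fun s => (hbound s).1)
          ha (by positivity) measure_Ioc_lt_top.ne 1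
    _ ≤ (n : ℝ) ^ 3 * (exp (-(n : ℝ) * δ * t₁) *
          ((((n : ℝ) * (γ - δ)) ^ 2)⁻¹ * volume.real (Icc t₁ t₂))) := by
        gcongr
        exact expKernel.setIntegral_setIntegral_sub_le ha measure_Ioc_lt_top.ne
          measure_Icc_lt_top.ne
    _ = (n : ℝ) / (γ - δ) ^ 2 * exp (-(n : ℝ) * δ * t₁) * (t₂ - t₁) := by
        rw [Real.volume_real_Icc_of_le h12.le]
        field_simp

theorem I3_tightness_estimate
    (h : ℝ → ℝ) (hc : Continuous h) (hsupp : Function.support h ⊆ Set.Icc 0 1)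
    (ht : ℝ → ℝ) (hht : ∀ s, ht s = ∫ t in Set.Ioc s 1, h t)
    (t₁ t₂ : ℝ) (h01 : 0 ≤ t₁) (h12 : t₁ < t₂) (h21 : t₂ ≤ 1)
    (hbound : ∀ s, 0 ≤ ht s ∧ ht s ≤ Set.indicator (Set.Icc t₁ t₂) (fun _ => 1) s)
    (γ δ : ℝ) (hδ : 0 < δ) (hγδ : δ < γ) (n : ℕ) (hn : 1 ≤ n) :
    (n : ℝ) ^ 3 *
        ∫ s in Set.Ioc (0:ℝ) 1, Real.exp (-(n : ℝ) * δ * s) *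
          ∫ u in Set.Ioc s 1, Real.exp (-(n : ℝ) * γ * (u - s)) * ht u *
            ∫ v in Set.Ioc s u, ht v
      ≤ (n : ℝ) / (γ - δ) ^ 2 * Real.exp (-(n : ℝ) * δ * t₁) * (t₂ - t₁) :=
  I3_tightness_estimate_general ht t₁ t₂ h12 hbound γ δ hδ hγδ n hn
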